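/- arXiv:2006.14211 — 3 statements merged into one kernel-verified Lean document; each statement's English description precedes it below -/
import Mathlib

section
/- Let w¹, w² ∈ R^d be two models with ‖w¹ − w²‖_2 ≤ τ, let y ∈ R^n be any response vector, and for j = 1, 2 let s^j be the M-truncated weight vectors they induce, s^j_i = min(M, 1/|⟨w^j, x_i⟩ − y_i|), with S^j = diag(s^j). Then for any covariate matrix X = [x_1,...,x_n] ∈ R^{d×n} with ‖x_i‖_2 ≤ R_X for all i, it holds deterministically that |λ_min(X S¹ X^T) − λ_min(X S² X^T)| ≤ 2nτM²R_X³, and moreover ‖X S¹ X^T − X S² X^T‖_2 ≤ 2nτM²R_X³. -/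
open MeasureTheory ProbabilityTheory Matrix

/-- Euclidean norm of a vector in `Fin k → ℝ`. -/
noncomputable def euclNorm {k : ℕ} (v : Fin k → ℝ) : ℝ := Real.sqrt (∑ j, v j ^ 2)

/-- The `M`-truncated IRLS weight for a residual `r`, i.e. `min (1/|r|) M`,
interpreted as `M` when the residual is zero. -/
noncomputable def trWeight (M r : ℝ) : ℝ := if r = 0 then M else min (1 / |r|) M

/-- Smallest eigenvalue of a symmetric matrix, via the Rayleigh quotient. -/
noncomputable def lamMin {k : ℕ} (A : Matrix (Fin k) (Fin k) ℝ) : ℝ :=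
  sInf {r : ℝ | ∃ v : Fin k → ℝ, euclNorm v = 1 ∧ r = v ⬝ᵥ A.mulVec v}

/-- Largest eigenvalue of a symmetric matrix, via the Rayleigh quotient. -/
noncomputable def lamMax {k : ℕ} (A : Matrix (Fin k) (Fin k) ℝ) : ℝ :=
  sSup {r : ℝ | ∃ v : Fin k → ℝ, euclNorm v = 1 ∧ r = v ⬝ᵥ A.mulVec v}

/-- Operator (spectral) norm of a `d × n` real matrix. -/
noncomputable def opNorm2 {d n : ℕ} (X : Matrix (Fin d) (Fin n) ℝ) : ℝ :=
  Real.sqrt (lamMax (X * Xᵀ))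

/-- Covariate matrix whose `i`-th column is the sample point `s i`. -/
def Xmat {d n : ℕ} (s : Fin n → Fin d → ℝ) : Matrix (Fin d) (Fin n) ℝ :=
  Matrix.of fun j i => s i j

/-- `X_G`: the matrix agreeing with `X` on columns in `G` and zero elsewhere. -/
def restrictCols {d n : ℕ} (X : Matrix (Fin d) (Fin n) ℝ) (G : Finset (Fin n)) :
    Matrix (Fin d) (Fin n) ℝ :=
  Matrix.of fun j i => if i ∈ G then X j i else 0

/-- The `M`-truncated weights assigned by model `w` on data `(X, y)`. -/
noncomputable def stirWeights {d n : ℕ} (X : Matrix (Fin d) (Fin n) ℝ) (y : Fin n → ℝ)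
    (M : ℝ) (w : Fin d → ℝ) : Fin n → ℝ :=
  fun i => trWeight M ((Xᵀ.mulVec w - y) i)

/-- One step of (M-truncated) IRLS: weighted least squares with the current weights. -/
noncomputable def stirStep {d n : ℕ} (X : Matrix (Fin d) (Fin n) ℝ) (y : Fin n → ℝ)
    (M : ℝ) (w : Fin d → ℝ) : Fin d → ℝ :=
  (X * Matrix.diagonal (stirWeights X y M w) * Xᵀ)⁻¹.mulVec
    (X.mulVec fun i => stirWeights X y M w i * y i)

/-- One step of STIR-GD with step length `C`: `w - (2C/(Mn)) • X S r`. -/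
noncomputable def stirGDStep {d n : ℕ} (X : Matrix (Fin d) (Fin n) ℝ) (y : Fin n → ℝ)
    (C M : ℝ) (w : Fin d → ℝ) : Fin d → ℝ :=
  w - (2 * C / (M * n)) • X.mulVec (fun i => stirWeights X y M w i * (Xᵀ.mulVec w - y) i)

/-- An execution trace of a stagewise truncated algorithm (STIR / STIR-GD):
`wStage T` is the model at the start of stage `T`, within stage `T` the truncation
level is `η^T * M₁`, the inner loop applies `step`, and the stage ends the first time
successive iterates are within `2/(η * (η^T * M₁))` of each other. -/
def IsSTIRTrace {d : ℕ} (step : ℝ → (Fin d → ℝ) → (Fin d → ℝ))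
    (M₁ η : ℝ) (w0 : Fin d → ℝ) (wStage : ℕ → Fin d → ℝ) (stageLen : ℕ → ℕ) : Prop :=
  wStage 0 = w0 ∧
  ∃ wIter : ℕ → ℕ → Fin d → ℝ,
    (∀ T, wIter T 0 = wStage T) ∧
    (∀ T t, wIter T (t + 1) = step (η ^ T * M₁) (wIter T t)) ∧
    (∀ T, euclNorm (wIter T (stageLen T + 1) - wIter T (stageLen T)) ≤
      2 / (η * (η ^ T * M₁))) ∧
    (∀ T t, t < stageLen T →
      2 / (η * (η ^ T * M₁)) < euclNorm (wIter T (t + 1) - wIter T t)) ∧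
    (∀ T, wStage (T + 1) = wIter T (stageLen T + 1))

/-- A real random variable `Z` is `R`-sub-Gaussian (ψ₂-norm at most `R`). -/
def IsSubGaussianRV {Ω : Type*} [MeasurableSpace Ω] (μ : Measure Ω) (Z : Ω → ℝ) (R : ℝ) : Prop :=
  ∀ p : ℝ, 1 ≤ p → (∫ ω, |Z ω| ^ p ∂μ) ^ (1 / p) ≤ R * Real.sqrt p

/-- A distribution on `ℝ^d` is `R`-sub-Gaussian if all its one-dimensional marginals are. -/
def IsSubGaussianVec {d : ℕ} (D : Measure (Fin d → ℝ)) (R : ℝ) : Prop :=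
  ∀ v : Fin d → ℝ, euclNorm v = 1 → IsSubGaussianRV D (fun x => v ⬝ᵥ x) R

/-- A distribution on `ℝ^d` is isotropic if `E ⟨v, x⟩² = 1` for every unit `v`. -/
def IsIsotropic {d : ℕ} (D : Measure (Fin d → ℝ)) : Prop :=
  ∀ v : Fin d → ℝ, euclNorm v = 1 → ∫ x, (v ⬝ᵥ x) ^ 2 ∂D = 1

/-- The weighted strong convexity constant
`c = inf_{u,v unit} E_{x~D} [ min(1/|⟨u,x⟩|, 1) ⟨x,v⟩² ]`. -/
noncomputable def cWSC {d : ℕ} (D : Measure (Fin d → ℝ)) : ℝ :=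
  ⨅ p : {q : (Fin d → ℝ) × (Fin d → ℝ) // euclNorm q.1 = 1 ∧ euclNorm q.2 = 1},
    ∫ x, trWeight 1 (p.1.1 ⬝ᵥ x) * (p.1.2 ⬝ᵥ x) ^ 2 ∂D

/-- The weighted strong convexity constant in the presence of dense noise:
`c_ε = inf_{0 ≤ r ≤ 1/M, u,v unit} E [ min(1/|Mr⟨u,x⟩ - Mε|, 1) ⟨x,v⟩² ]`. -/
noncomputable def cWSCnoise {d : ℕ} (D : Measure (Fin d → ℝ)) (Dε : Measure ℝ) [SFinite Dε]
    (M : ℝ) : ℝ :=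
  ⨅ p : {q : ℝ × (Fin d → ℝ) × (Fin d → ℝ) //
      0 ≤ q.1 ∧ q.1 ≤ 1 / M ∧ euclNorm q.2.1 = 1 ∧ euclNorm q.2.2 = 1},
    ∫ z : (Fin d → ℝ) × ℝ,
      trWeight 1 (M * p.1.1 * (p.1.2.1 ⬝ᵥ z.1) - M * z.2) * (p.1.2.2 ⬝ᵥ z.1) ^ 2 ∂(D.prod Dε)

/-- The weighted Gram matrix `X_G S_G X_Gᵀ` induced by the sample `s`, the clean responses
`y_i = ⟨w*, x_i⟩`, the truncation level `M` and the model `w`. -/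
noncomputable def gramG {d n : ℕ} (s : Fin n → Fin d → ℝ) (G : Finset (Fin n))
    (wstar : Fin d → ℝ) (M : ℝ) (w : Fin d → ℝ) : Matrix (Fin d) (Fin d) ℝ :=
  restrictCols (Xmat s) G *
    Matrix.diagonal (fun i => if i ∈ G then trWeight M (s i ⬝ᵥ (w - wstar)) else 0) *
    (restrictCols (Xmat s) G)ᵀ

/-- The weighted Gram matrix `X_G S_G X_Gᵀ` in the dense-noise setting, where the responses
on good points are `y_i = ⟨w*, x_i⟩ + e_i`. -/
noncomputable def gramGnoisy {d n : ℕ} (s : Fin n → Fin d → ℝ) (e : Fin n → ℝ)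
    (G : Finset (Fin n)) (wstar : Fin d → ℝ) (M : ℝ) (w : Fin d → ℝ) :
    Matrix (Fin d) (Fin d) ℝ :=
  restrictCols (Xmat s) G *
    Matrix.diagonal (fun i => if i ∈ G then trWeight M (s i ⬝ᵥ (w - wstar) - e i) else 0) *
    (restrictCols (Xmat s) G)ᵀ

/-- The scaled Huber loss `f_ε`. -/
noncomputable def huberS (ε x : ℝ) : ℝ := if |x| ≤ ε then (x ^ 2 / ε + ε) / 2 else |x|

/-- The majorizer `g_ε(x; a)` of the scaled Huber loss. -/
noncomputable def huberMaj (ε x a : ℝ) : ℝ := (x ^ 2 / max |a| ε + max |a| ε) / 2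

/-- The scaled-Huber objective `ℓ_ε(w) = (1/n) ∑ᵢ f_ε(⟨w, xᵢ⟩ - yᵢ)`. -/
noncomputable def huberObj {d n : ℕ} (X : Matrix (Fin d) (Fin n) ℝ) (y : Fin n → ℝ)
    (ε : ℝ) (w : Fin d → ℝ) : ℝ :=
  (1 / (n : ℝ)) * ∑ i, huberS ε ((Xᵀ.mulVec w - y) i)

/-!
Truncation makes the weight `r ↦ min (1/|r|) M = 1 / max (1/M) |r|` an `M²`-Lipschitz function
of the residual, and the residuals of the two models at `xᵢ` differ by `⟨xᵢ, w¹ - w²⟩`, so each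
weight moves by at most `M² R_X τ`. Hence the bilinear form of `X (S¹ - S²) Xᵀ` is bounded by
`n M² R_X τ · R_X² ‖u‖ ‖v‖`. A bound on the bilinear form bounds the spectral norm, and on the
diagonal it moves every Rayleigh quotient, hence their infimum `λ_min`, by at most as much.
-/

section EuclNorm

variable {k : ℕ}

lemma euclNorm_eq_norm (v : Fin k → ℝ) : euclNorm v = ‖WithLp.toLp 2 v‖ := by
  simp [euclNorm, EuclideanSpace.norm_eq]

lemma euclNorm_nonneg (v : Fin k → ℝ) : 0 ≤ euclNorm v := Real.sqrt_nonneg _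

lemma abs_dotProduct_le_euclNorm_mul (a b : Fin k → ℝ) :
    |a ⬝ᵥ b| ≤ euclNorm a * euclNorm b := by
  simpa [euclNorm_eq_norm, EuclideanSpace.inner_eq_star_dotProduct, dotProduct_comm] using
    abs_real_inner_le_norm (WithLp.toLp 2 a) (WithLp.toLp 2 b)

lemma dotProduct_self_eq_euclNorm_sq (a : Fin k → ℝ) : a ⬝ᵥ a = euclNorm a ^ 2 := by
  rw [euclNorm_eq_norm, ← real_inner_self_eq_norm_sq, EuclideanSpace.inner_eq_star_dotProduct]
  simp

end EuclNorm

section TruncatedWeight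

variable {M : ℝ}

lemma trWeight_eq_inv_max (hM : 0 < M) (r : ℝ) : trWeight M r = (max M⁻¹ |r|)⁻¹ := by
  rcases eq_or_ne r 0 with rfl | hr
  · simp [trWeight, hM.le]
  · rw [trWeight, if_neg hr, one_div]
    rcases le_total M⁻¹ |r| with h | h
    · rw [max_eq_right h, min_eq_left (inv_le_of_inv_le₀ hM h)]
    · rw [max_eq_left h, inv_inv, min_eq_right ((le_inv_comm₀ hM (abs_pos.2 hr)).2 h)]

lemma trWeight_nonneg (hM : 0 < M) (r : ℝ) : 0 ≤ trWeight M r := by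
  rw [trWeight_eq_inv_max hM]
  positivity

lemma abs_trWeight_sub_le (hM : 0 < M) (a b : ℝ) :
    |trWeight M a - trWeight M b| ≤ M ^ 2 * |a - b| := by
  rw [trWeight_eq_inv_max hM, trWeight_eq_inv_max hM]
  set p := max M⁻¹ |a|
  set q := max M⁻¹ |b|
  have hp : M⁻¹ ≤ p := le_max_left _ _
  have hq : M⁻¹ ≤ q := le_max_left _ _
  have hp₀ : 0 < p := (inv_pos.2 hM).trans_le hp
  have hq₀ : 0 < q := (inv_pos.2 hM).trans_le hq
  have hpq : |q - p| ≤ |a - b| := by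
    have := (abs_max_sub_max_le_abs |b| |a| M⁻¹).trans (abs_abs_sub_abs_le_abs_sub b a)
    rwa [max_comm |a|, max_comm |b|, abs_sub_comm b] at this
  calc |p⁻¹ - q⁻¹| = |q - p| * (p⁻¹ * q⁻¹) := by
        rw [inv_sub_inv hp₀.ne' hq₀.ne', abs_div, abs_of_pos (mul_pos hp₀ hq₀), div_eq_mul_inv,
          mul_inv]
    _ ≤ |a - b| * (M * M) := by
        gcongr
        · exact inv_le_of_inv_le₀ hM hp
        · exact inv_le_of_inv_le₀ hM hq
    _ = M ^ 2 * |a - b| := by ring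

end TruncatedWeight

section WeightedGram

lemma dotProduct_gram_mulVec {m ι R : Type*} [Fintype m] [Fintype ι] [DecidableEq ι]
    [CommSemiring R] (X : Matrix m ι R) (s : ι → R) (a b : m → R) :
    a ⬝ᵥ (X * diagonal s * Xᵀ) *ᵥ b = ∑ i, s i * (Xᵀ *ᵥ a) i * (Xᵀ *ᵥ b) i := by
  rw [← mulVec_mulVec, ← mulVec_mulVec, dotProduct_mulVec, ← mulVec_transpose]
  simp only [dotProduct, mulVec_diagonal]
  exact Finset.sum_congr rfl fun i _ => by ring

lemma gram_sub_gram {m ι R : Type*} [Fintype ι] [DecidableEq ι] [CommRing R]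
    (X : Matrix m ι R) (s t : ι → R) :
    X * diagonal s * Xᵀ - X * diagonal t * Xᵀ = X * diagonal (s - t) * Xᵀ := by
  rw [← Matrix.sub_mul, ← Matrix.mul_sub, diagonal_sub]
  rfl

lemma posSemidef_gram {m ι : Type*} [Fintype m] [Fintype ι] [DecidableEq ι]
    (X : Matrix m ι ℝ) {s : ι → ℝ} (hs : 0 ≤ s) : (X * diagonal s * Xᵀ).PosSemidef := by
  simpa only [conjTranspose_eq_transpose_of_trivial] using
    (PosSemidef.diagonal hs).mul_mul_conjTranspose_same X

variable {d n : ℕ}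

lemma abs_dotProduct_gram_mulVec_le (X : Matrix (Fin d) (Fin n) ℝ) {s : Fin n → ℝ} {δ R : ℝ}
    (hs : ∀ i, |s i| ≤ δ) (hX : ∀ i, euclNorm (fun j => X j i) ≤ R) (a b : Fin d → ℝ) :
    |a ⬝ᵥ (X * diagonal s * Xᵀ) *ᵥ b| ≤ n * δ * R ^ 2 * (euclNorm a * euclNorm b) := by
  have hcol : ∀ i (v : Fin d → ℝ), |(Xᵀ *ᵥ v) i| ≤ R * euclNorm v := fun i v =>
    (abs_dotProduct_le_euclNorm_mul _ v).trans
      (mul_le_mul_of_nonneg_right (hX i) (euclNorm_nonneg v))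
  rw [dotProduct_gram_mulVec]
  calc |∑ i, s i * (Xᵀ *ᵥ a) i * (Xᵀ *ᵥ b) i|
      ≤ ∑ i, |s i| * |(Xᵀ *ᵥ a) i| * |(Xᵀ *ᵥ b) i| := 
        (Finset.abs_sum_le_sum_abs _ _).trans_eq (by simp only [abs_mul])
    _ ≤ ∑ _i : Fin n, δ * (R * euclNorm a) * (R * euclNorm b) := by
        refine Finset.sum_le_sum fun i _ => ?_
        have hδ : 0 ≤ δ := (abs_nonneg _).trans (hs i)
        have hRa : 0 ≤ R * euclNorm a := (abs_nonneg _).trans (hcol i a)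
        exact mul_le_mul (mul_le_mul (hs i) (hcol i a) (abs_nonneg _) hδ) (hcol i b)
          (abs_nonneg _) (mul_nonneg hδ hRa)
    _ = n * δ * R ^ 2 * (euclNorm a * euclNorm b) := by
        simp only [Finset.sum_const, Finset.card_univ, Fintype.card_fin, nsmul_eq_mul]
        ring

end WeightedGram

section RayleighQuotient

variable {k : ℕ}

lemma lamMin_le_lamMin_add {A B : Matrix (Fin k) (Fin k) ℝ} (hA : A.PosSemidef) {ε : ℝ}
    (hε : 0 ≤ ε) (h : ∀ v, euclNorm v = 1 → v ⬝ᵥ A *ᵥ v ≤ v ⬝ᵥ B *ᵥ v + ε) :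
    lamMin A ≤ lamMin B + ε := by
  by_cases hsphere : ∃ v : Fin k → ℝ, euclNorm v = 1
  · obtain ⟨v₀, hv₀⟩ := hsphere
    have hbdd : BddBelow {r : ℝ | ∃ v : Fin k → ℝ, euclNorm v = 1 ∧ r = v ⬝ᵥ A *ᵥ v} := by
      refine ⟨0, ?_⟩
      rintro r ⟨v, -, rfl⟩
      simpa using hA.dotProduct_mulVec_nonneg v
    rw [← sub_le_iff_le_add, lamMin, lamMin]
    refine le_csInf ⟨_, v₀, hv₀, rfl⟩ ?_
    rintro r ⟨v, hv, rfl⟩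
    linarith [csInf_le hbdd ⟨v, hv, rfl⟩, h v hv]
  · push Not at hsphere
    simp [lamMin, hsphere, hε]

lemma abs_lamMin_sub_le {A B : Matrix (Fin k) (Fin k) ℝ} (hA : A.PosSemidef) (hB : B.PosSemidef)
    {ε : ℝ} (hε : 0 ≤ ε) (h : ∀ v, euclNorm v = 1 → |v ⬝ᵥ (A - B) *ᵥ v| ≤ ε) :
    |lamMin A - lamMin B| ≤ ε := by
  have hAB : ∀ v, euclNorm v = 1 → |v ⬝ᵥ A *ᵥ v - v ⬝ᵥ B *ᵥ v| ≤ ε := fun v hv => by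
    simpa only [sub_mulVec, dotProduct_sub] using h v hv
  have hBA : lamMin B ≤ lamMin A + ε :=
    lamMin_le_lamMin_add hB hε fun v hv => by linarith [(abs_le.1 (hAB v hv)).1]
  have hAB' : lamMin A ≤ lamMin B + ε :=
    lamMin_le_lamMin_add hA hε fun v hv => by linarith [(abs_le.1 (hAB v hv)).2]
  exact abs_le.2 ⟨by linarith, by linarith⟩

end RayleighQuotient

lemma opNorm2_le_of_dotProduct_mulVec_le {d n : ℕ} {A : Matrix (Fin d) (Fin n) ℝ} {ε : ℝ}
    (hε : 0 ≤ ε) (h : ∀ u v, u ⬝ᵥ A *ᵥ v ≤ ε * (euclNorm u * euclNorm v)) : opNorm2 A ≤ ε := by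
  refine Real.sqrt_le_iff.2 ⟨hε, Real.sSup_le ?_ (sq_nonneg ε)⟩
  rintro r ⟨v, hv, rfl⟩
  set w := Aᵀ *ᵥ v
  have hw : v ⬝ᵥ (A * Aᵀ) *ᵥ v = euclNorm w ^ 2 := by
    rw [← dotProduct_self_eq_euclNorm_sq, ← mulVec_mulVec, dotProduct_mulVec, ← mulVec_transpose]
  have hwε : euclNorm w ^ 2 ≤ ε * euclNorm w := by
    simpa [hv, ← hw, ← mulVec_mulVec] using h v w
  rw [hw]
  nlinarith [euclNorm_nonneg w]

lemma abs_stirWeights_sub_le {d n : ℕ} {X : Matrix (Fin d) (Fin n) ℝ} (y : Fin n → ℝ)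
    {M R τ : ℝ} (hM : 0 < M) {w₁ w₂ : Fin d → ℝ} (hw : euclNorm (w₁ - w₂) ≤ τ)
    (hX : ∀ i, euclNorm (fun j => X j i) ≤ R) (i : Fin n) :
    |stirWeights X y M w₁ i - stirWeights X y M w₂ i| ≤ M ^ 2 * (R * τ) := by
  have hres : (Xᵀ *ᵥ w₁ - y) i - (Xᵀ *ᵥ w₂ - y) i = (Xᵀ *ᵥ (w₁ - w₂)) i := by
    simp only [mulVec_sub, Pi.sub_apply]
    ring
  have hR : 0 ≤ R := (euclNorm_nonneg _).trans (hX i)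
  calc |stirWeights X y M w₁ i - stirWeights X y M w₂ i|
      ≤ M ^ 2 * |(Xᵀ *ᵥ w₁ - y) i - (Xᵀ *ᵥ w₂ - y) i| := abs_trWeight_sub_le hM _ _
    _ ≤ M ^ 2 * (R * τ) := by
        rw [hres]
        gcongr
        exact (abs_dotProduct_le_euclNorm_mul _ _).trans
          (mul_le_mul (hX i) hw (euclNorm_nonneg _) hR)

/-- **Lemma (approximation bound for weighted Gram matrices).**
If `‖w¹ - w²‖ ≤ τ` and all covariates have norm at most `R_X`, then the smallest
eigenvalues of the weighted Gram matrices `X S¹ Xᵀ` and `X S² Xᵀ` induced by the two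
models differ by at most `2 n τ M² R_X³`, and moreover
`‖X S¹ Xᵀ - X S² Xᵀ‖₂ ≤ 2 n τ M² R_X³`. -/
theorem irls_gram_approximation
    {d n : ℕ} (X : Matrix (Fin d) (Fin n) ℝ) (y : Fin n → ℝ)
    (w1 w2 : Fin d → ℝ) (τ M RX : ℝ) (hM : 0 < M)
    (hw : euclNorm (w1 - w2) ≤ τ)
    (hX : ∀ i, euclNorm (fun j => X j i) ≤ RX) :
    |lamMin (X * Matrix.diagonal (stirWeights X y M w1) * Xᵀ) -
        lamMin (X * Matrix.diagonal (stirWeights X y M w2) * Xᵀ)| ≤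
      2 * n * τ * M ^ 2 * RX ^ 3 ∧
    opNorm2 (X * Matrix.diagonal (stirWeights X y M w1) * Xᵀ -
        X * Matrix.diagonal (stirWeights X y M w2) * Xᵀ) ≤
      2 * n * τ * M ^ 2 * RX ^ 3 := by
  have hweights := abs_stirWeights_sub_le y hM hw hX
  set ε : ℝ := n * (M ^ 2 * (RX * τ)) * RX ^ 2
  have hε : 0 ≤ ε := by
    rcases n.eq_zero_or_pos with rfl | hn
    · simp [ε]
    · exact mul_nonneg (mul_nonneg n.cast_nonneg ((abs_nonneg _).trans (hweights ⟨0, hn⟩)))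
        (sq_nonneg RX)
  have hε₂ : ε ≤ 2 * n * τ * M ^ 2 * RX ^ 3 := by
    linarith [show ε = n * τ * M ^ 2 * RX ^ 3 by ring]
  have hbilin : ∀ u v, |u ⬝ᵥ (X * diagonal (stirWeights X y M w1) * Xᵀ -
      X * diagonal (stirWeights X y M w2) * Xᵀ) *ᵥ v| ≤ ε * (euclNorm u * euclNorm v) := by
    intro u v
    rw [gram_sub_gram]
    exact abs_dotProduct_gram_mulVec_le X hweights hX u v
  have hpsd : ∀ w, (X * diagonal (stirWeights X y M w) * Xᵀ).PosSemidef := fun w =>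
    posSemidef_gram X fun i => trWeight_nonneg hM _
  refine ⟨?_, ?_⟩
  · refine (abs_lamMin_sub_le (hpsd w1) (hpsd w2) hε fun v hv => ?_).trans hε₂
    simpa [hv] using hbilin v v
  · exact (opNorm2_le_of_dotProduct_mulVec_le hε fun u v =>
      (le_abs_self _).trans (hbilin u v)).trans hε₂
end

section
/- For any a, x ∈ R and ε > 0, the function g_ε(x; a) = (1/2)(x²/max{|a|, ε} + max{|a|, ε}) is a valid majorizer of the scaled Huber loss f_ε: it satisfies g_ε(a; a) = f_ε(a) and g_ε(x; a) ≥ f_ε(x). -/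
open MeasureTheory ProbabilityTheory Matrix

/-- **Claim (the scaled Huber loss is majorized by `g_ε`).**
For any `a, x ∈ ℝ` and `ε > 0`, `g_ε(a; a) = f_ε(a)` and `g_ε(x; a) ≥ f_ε(x)`. -/
theorem huber_majorizer (ε a : ℝ) (hε : 0 < ε) :
    huberMaj ε a a = huberS ε a ∧ ∀ x : ℝ, huberS ε x ≤ huberMaj ε x a := by
  have hm : ε ≤ max |a| ε := le_max_right _ _
  have hmpos : 0 < max |a| ε := lt_of_lt_of_le hε hm
  constructor
  · unfold huberMaj huberS
    by_cases h : |a| ≤ ε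
    · rw [if_pos h, max_eq_right h]
    · rw [if_neg h, max_eq_left (le_of_not_ge h)]
      have ha : 0 < |a| := lt_trans hε (lt_of_not_ge h)
      rw [show a ^ 2 = |a| * |a| by rw [← sq_abs]; ring]
      field_simp
      nlinarith [sq_abs a, sq_nonneg a]
  · intro x
    unfold huberMaj huberS
    set m := max |a| ε with hmdef
    by_cases h : |x| ≤ ε
    · rw [if_pos h]
      have key : x ^ 2 / ε + ε ≤ x ^ 2 / m + m := by
        have hx2 : x ^ 2 ≤ ε * m := by
          calc x ^ 2 = |x| * |x| := by rw [← sq_abs]; ring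
            _ ≤ ε * m := mul_le_mul h (h.trans hm) (abs_nonneg _) hε.le
        rw [div_add' _ _ _ hε.ne', div_add' _ _ _ hmpos.ne',
          div_le_div_iff₀ hε hmpos]
        nlinarith
      linarith
    · rw [if_neg h]
      have hx : 0 ≤ |x| := abs_nonneg x
      have : 2 * |x| * m ≤ x ^ 2 + m ^ 2 := by nlinarith [sq_nonneg (|x| - m), sq_abs x]
      rw [le_div_iff₀ (by norm_num : (0:ℝ) < 2), div_add' _ _ _ hmpos.ne',
        le_div_iff₀ hmpos]
      nlinarith
end

section
/- For any a ∈ R and ε > 0, the derivative of the scaled Huber loss f_ε at a equals the partial derivative in x of the majorizer g_ε(x; a) evaluated at x = a; explicitly, both equal a/ε when |a| ≤ ε and sign(a) when |a| > ε. Consequently, for any data (x_i, y_i)_{i=1}^n and any model w⁰, ∇℘_ε(w⁰; w⁰) = n·∇ℓ_ε(w⁰), where ℓ_ε(w) = (1/n)Σ_i f_ε(⟨w, x_i⟩ − y_i) and ℘_ε(w; w⁰) = Σ_i g_ε(⟨w, x_i⟩ − y_i; ⟨w⁰, x_i⟩ − y_i). -/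
open MeasureTheory ProbabilityTheory Matrix

/-!
Write `c = a / max |a| ε`, so `|c| ≤ 1`. Near `a`, `f_ε` lies above the line
`x ↦ c x + ε (1 - c²) / 2` (a supporting line of the convex function `f_ε`) and below the
majorizer `g_ε(·; a)`; both touch `f_ε` at `a` with slope `c`. Squeezing gives
`f_ε'(a) = c = ∂ₓ g_ε(a; a)` at once, without treating the kinks `|a| = ε` separately.
The gradient identity is then the chain rule applied term by term.
-/

theorem HasDerivAt.of_squeeze {l f u : ℝ → ℝ} {c a : ℝ} (hl : HasDerivAt l c a)
    (hu : HasDerivAt u c a) (hlf : l ≤ᶠ[nhds a] f) (hfu : f ≤ᶠ[nhds a] u) (hlu : l a = u a) :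
    HasDerivAt f c a := by
  have hfa : f a = l a := le_antisymm (hlu ▸ hfu.self_of_nhds) hlf.self_of_nhds
  rw [hasDerivAt_iff_isLittleO] at hl hu ⊢
  refine (Asymptotics.IsBigO.of_bound' ?_).trans_isLittleO (hl.norm_left.add hu.norm_left)
  filter_upwards [hlf, hfu] with x hlx hux
  simp only [Real.norm_eq_abs, smul_eq_mul, hfa, ← hlu]
  refine (abs_le.2 ⟨?_, ?_⟩).trans (le_abs_self _)
  · linarith [neg_abs_le (l x - l a - (x - a) * c), abs_nonneg (u x - l a - (x - a) * c)]
  · linarith [le_abs_self (u x - l a - (x - a) * c), abs_nonneg (l x - l a - (x - a) * c)]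

theorem fderiv_sum_comp_eq_of_hasDerivAt {ι E : Type*} [Fintype ι] [NormedAddCommGroup E]
    [NormedSpace ℝ E] {r : ι → E → ℝ} {w : E} (hr : ∀ i, DifferentiableAt ℝ (r i) w)
    {φ ψ : ι → ℝ → ℝ} {c : ι → ℝ} (hφ : ∀ i, HasDerivAt (φ i) (c i) (r i w))
    (hψ : ∀ i, HasDerivAt (ψ i) (c i) (r i w)) :
    fderiv ℝ (fun v => ∑ i, φ i (r i v)) w = fderiv ℝ (fun v => ∑ i, ψ i (r i v)) w := by
  have key (χ : ι → ℝ → ℝ) (hχ : ∀ i, HasDerivAt (χ i) (c i) (r i w)) :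
      fderiv ℝ (fun v => ∑ i, χ i (r i v)) w = ∑ i, c i • fderiv ℝ (r i) w :=
    (HasFDerivAt.fun_sum fun i _ => (hχ i).comp_hasFDerivAt w (hr i).hasFDerivAt).fderiv
  rw [key φ hφ, key ψ hψ]

theorem div_abs_eq_sign (a : ℝ) : a / |a| = Real.sign a := by
  rcases lt_trichotomy a 0 with h | rfl | h
  · rw [abs_of_neg h, Real.sign_of_neg h, div_neg, div_self h.ne]
  · simp
  · rw [abs_of_pos h, Real.sign_of_pos h, div_self h.ne']

theorem div_max_abs_eq (ε a : ℝ) :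
    a / max |a| ε = if |a| ≤ ε then a / ε else Real.sign a := by
  split_ifs with h
  · rw [max_eq_right h]
  · rw [max_eq_left (not_le.1 h).le, div_abs_eq_sign]

theorem huberS_le_huberMaj {ε : ℝ} (hε : 0 < ε) (x a : ℝ) : huberS ε x ≤ huberMaj ε x a := by
  unfold huberS huberMaj
  set m := max |a| ε
  have hεm : ε ≤ m := le_max_right _ _
  have hm : 0 < m := hε.trans_le hεm
  split_ifs with h
  · have hx : x ^ 2 ≤ ε * m := by nlinarith [sq_abs x, abs_nonneg x]
    rw [div_add' _ _ _ hε.ne', div_add' _ _ _ hm.ne', div_le_div_iff_of_pos_right two_pos,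
      div_le_div_iff₀ hε hm]
    nlinarith [mul_nonneg (sub_nonneg.2 hεm) (sub_nonneg.2 hx)]
  · rw [div_add' _ _ _ hm.ne', le_div_iff₀ two_pos, le_div_iff₀ hm]
    nlinarith [sq_nonneg (|x| - m), sq_abs x]

theorem linear_le_huberS {ε c : ℝ} (hε : 0 < ε) (hc : |c| ≤ 1) (x : ℝ) :
    c * x + ε * (1 - c ^ 2) / 2 ≤ huberS ε x := by
  unfold huberS
  split_ifs with h
  · rw [div_add' _ _ _ hε.ne', div_div, le_div_iff₀ (by positivity)]
    nlinarith [sq_nonneg (x - ε * c)]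
  · have hcx : c * x ≤ |c| * |x| := abs_mul c x ▸ le_abs_self _
    have hx : ε * (1 - |c|) ≤ |x| * (1 - |c|) :=
      mul_le_mul_of_nonneg_right (not_le.1 h).le (sub_nonneg.2 hc)
    nlinarith [mul_nonneg hε.le (sq_nonneg (1 - |c|)), sq_abs c]

theorem hasDerivAt_huberMaj (ε a : ℝ) :
    HasDerivAt (fun x => huberMaj ε x a) (a / max |a| ε) a := by
  refine ((((hasDerivAt_pow 2 a).div_const (max |a| ε)).add_const (max |a| ε)).div_const
    2).congr_deriv ?_
  norm_num
  ring

theorem linear_eq_huberMaj_self {ε : ℝ} (hε : 0 < ε) (a : ℝ) :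
    a / max |a| ε * a + ε * (1 - (a / max |a| ε) ^ 2) / 2 = huberMaj ε a a := by
  unfold huberMaj
  rcases le_total |a| ε with h | h
  · rw [max_eq_right h]
    field_simp
    ring
  · have ha : |a| ≠ 0 := (hε.trans_le h).ne'
    rw [max_eq_left h]
    field_simp
    rw [sq_abs]
    ring

theorem hasDerivAt_huberS {ε : ℝ} (hε : 0 < ε) (a : ℝ) :
    HasDerivAt (huberS ε) (a / max |a| ε) a := by
  set c := a / max |a| ε
  have hc : |c| ≤ 1 := by
    rw [abs_div, abs_of_nonneg ((abs_nonneg a).trans (le_max_left _ _))]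
    exact div_le_one_of_le₀ (le_max_left _ _) ((abs_nonneg a).trans (le_max_left _ _))
  refine HasDerivAt.of_squeeze (l := fun x => c * x + ε * (1 - c ^ 2) / 2) ?_
    (hasDerivAt_huberMaj ε a) (.of_forall (linear_le_huberS hε hc))
    (.of_forall fun x => huberS_le_huberMaj hε x a) (linear_eq_huberMaj_self hε a)
  simpa using ((hasDerivAt_id a).const_mul c).add_const (ε * (1 - c ^ 2) / 2)

/-- **Claim (matching derivatives of the scaled Huber loss and its majorizer).**
For any `a ∈ ℝ` and `ε > 0`, `f_ε'(a) = ∂_x g_ε(x; a)|_{x = a}`, both being `a/ε` when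
`|a| ≤ ε` and `sign(a)` when `|a| > ε`. Consequently, for any data and any model `w⁰`,
`∇℘_ε(w⁰; w⁰) = n ∇ℓ_ε(w⁰)`. -/
theorem huber_majorizer_derivative (ε : ℝ) (hε : 0 < ε) :
    (∀ a : ℝ,
      HasDerivAt (huberS ε) (if |a| ≤ ε then a / ε else Real.sign a) a ∧
      HasDerivAt (fun x => huberMaj ε x a) (if |a| ≤ ε then a / ε else Real.sign a) a) ∧
    (∀ (d n : ℕ) (X : Matrix (Fin d) (Fin n) ℝ) (y : Fin n → ℝ) (w0 : Fin d → ℝ),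
      fderiv ℝ (fun w : Fin d → ℝ =>
          ∑ i, huberMaj ε ((Xᵀ.mulVec w - y) i) ((Xᵀ.mulVec w0 - y) i)) w0 =
        (n : ℝ) • fderiv ℝ (fun w : Fin d → ℝ => huberObj X y ε w) w0) := by
  refine ⟨fun a => div_max_abs_eq ε a ▸ ⟨hasDerivAt_huberS hε a, hasDerivAt_huberMaj ε a⟩,
    fun d n X y w0 => ?_⟩
  have hr (i : Fin n) : DifferentiableAt ℝ (fun w => (Xᵀ.mulVec w - y) i) w0 := by
    simp only [Pi.sub_apply, Matrix.mulVec, dotProduct]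
    fun_prop
  have hdiff : DifferentiableAt ℝ (fun w => ∑ i, huberS ε ((Xᵀ.mulVec w - y) i)) w0 :=
    DifferentiableAt.fun_sum fun i _ => (hasDerivAt_huberS hε _).differentiableAt.comp w0 (hr i)
  rw [fderiv_sum_comp_eq_of_hasDerivAt hr (fun i => hasDerivAt_huberMaj ε _)
    (fun i => hasDerivAt_huberS hε _)]
  unfold huberObj
  rw [fderiv_const_mul hdiff, smul_smul]
  rcases n.eq_zero_or_pos with rfl | hn
  · simp
  · rw [mul_one_div_cancel (by positivity), one_smul]
end
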